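/- Let V be a finite set of variables and φ = (C_1, …, C_m) a list of m clauses over V, each consisting of exactly three pairwise distinct literals. Let G be the multigraph whose vertex set is V × Bool (the set of literals) and whose edge multiset consists of: for each variable x, exactly n_x parallel edges between (x, true) and (x, false), where n_x is the total number of occurrences of x (in either polarity) among all clauses of φ; and, for each clause C_i with literals l_1, l_2, l_3, the three edges {l_1, l_2}, {l_2, l_3}, {l_1, l_3}. Then for every natural number k: there exists an assignment of V NAE-satisfying at least k clauses of φ if and only if there is a subset S of V × Bool whose cut in G has size at least 3m + 2k. -/

import Mathlib

open Finset

/-- The size of the cut determined by `S` in the multigraph with edge family `E`: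
the number of edge indices whose edge has exactly one endpoint in `S`. -/
def cutEdges {α : Type*} [DecidableEq α] {ι : Type*} [Fintype ι]
    (E : ι → α × α) (S : Finset α) : ℕ :=
  (Finset.univ.filter fun i =>
    ((E i).1 ∈ S ∧ (E i).2 ∉ S) ∨ ((E i).1 ∉ S ∧ (E i).2 ∈ S)).card

/-- The edge family of the multigraph associated to the E3-CNF formula `φ` (clauses
indexed by `Fin m`, with three literals each, literal `j` of clause `i` being `φ i j`):
for every occurrence `(i, j)` of a variable `x` an edge between `(x, true)` and
`(x, false)` (which produces `n_x` parallel edges between the two literals of `x`), and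
for every clause the triangle on its three literals. -/
def maxCutEdges {V : Type*} {m : ℕ} (φ : Fin m → Fin 3 → V × Bool) :
    (Fin m × Fin 3) ⊕ (Fin m × Fin 3) → (V × Bool) × (V × Bool) :=
  Sum.elim
    (fun p => (((φ p.1 p.2).1, true), ((φ p.1 p.2).1, false)))
    (fun p => (φ p.1 p.2, φ p.1 (p.2 + 1)))

/-!
Under `S` = the set of literals made true by `σ`, every variable edge is cut, and the triangle of
a clause contributes two cut edges if `σ` NAE-satisfies it and none otherwise: the cut has size
`3m + 2k`. Conversely, any `S` can be made consistent without shrinking its cut. At the variables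
`x` for which `S` contains both or neither of `(x, true)`, `(x, false)`, flip the literal of one
common polarity `b`. The variable edges of these variables, uncut before, are all cut afterwards:
one gained edge per occurrence. The triangles lose at most two edges per occurrence of a flipped
literal, and `b` can be chosen so that flipped literals make up at most half of those occurrences.
-/

open scoped symmDiff

section Cut

variable {α ι κ : Type*} [DecidableEq α] [Fintype ι] [Fintype κ]

lemma cutEdges_sumElim (E : ι → α × α) (F : κ → α × α) (S : Finset α) :
    cutEdges (Sum.elim E F) S = cutEdges E S + cutEdges F S := by
  simp only [cutEdges, ← Finset.card_disjSum]
  congr 1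
  ext (i | i) <;> simp

lemma cutEdges_le_add_card_endpoint_mem_symmDiff (E : ι → α × α) (S T : Finset α) :
    cutEdges E S ≤
      cutEdges E T + #{i | (E i).1 ∈ S ∆ T} + #{i | (E i).2 ∈ S ∆ T} := by
  classical
  refine (Finset.card_le_card fun i hi => ?_).trans
    ((Finset.card_union_le _ _).trans (add_le_add_left (Finset.card_union_le _ _) _))
  simp only [Finset.mem_union, Finset.mem_filter, Finset.mem_univ, true_and,
    Finset.mem_symmDiff] at hi ⊢
  tauto

end Cut

lemma exists_two_mul_card_filter_eq_le {ι : Type*} (s : Finset ι) (g : ι → Bool) :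
    ∃ b, 2 * #{i ∈ s | g i = b} ≤ #s := by
  have h := Finset.card_filter_add_card_filter_not (s := s) (fun i => g i = true)
  simp only [Bool.not_eq_true] at h
  rcases le_total #{i ∈ s | g i = true} #{i ∈ s | g i = false} with hle | hle
  · exact ⟨true, by omega⟩
  · exact ⟨false, by omega⟩

section Formula

variable {V : Type*} {m : ℕ} (φ : Fin m → Fin 3 → V × Bool)

def variableEdges (p : Fin m × Fin 3) : (V × Bool) × (V × Bool) :=
  (((φ p.1 p.2).1, true), ((φ p.1 p.2).1, false))

def triangleEdges (p : Fin m × Fin 3) : (V × Bool) × (V × Bool) :=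
  (φ p.1 p.2, φ p.1 (p.2 + 1))

lemma maxCutEdges_eq_sumElim :
    maxCutEdges φ = Sum.elim (variableEdges φ) (triangleEdges φ) := rfl

variable [DecidableEq V]

lemma cutEdges_variableEdges_add_card (S : Finset (V × Bool)) :
    cutEdges (variableEdges φ) S +
      #{p : Fin m × Fin 3 | ((φ p.1 p.2).1, true) ∈ S ↔ ((φ p.1 p.2).1, false) ∈ S} =
      3 * m := by
  have hcut : cutEdges (variableEdges φ) S =
      #{p : Fin m × Fin 3 | ¬(((φ p.1 p.2).1, true) ∈ S ↔ ((φ p.1 p.2).1, false) ∈ S)} :=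
    congrArg Finset.card (Finset.filter_congr fun p _ => by simp only [variableEdges]; tauto)
  rw [hcut, add_comm, Finset.card_filter_add_card_filter_not, Finset.card_univ, Fintype.card_prod,
    Fintype.card_fin, Fintype.card_fin, mul_comm]

lemma cutEdges_triangleEdges_le (S T : Finset (V × Bool)) :
    cutEdges (triangleEdges φ) S ≤
      cutEdges (triangleEdges φ) T + 2 * #{p : Fin m × Fin 3 | φ p.1 p.2 ∈ S ∆ T} := by
  have hshift : #{p | (triangleEdges φ p).2 ∈ S ∆ T} = #{p | (triangleEdges φ p).1 ∈ S ∆ T} :=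
    Finset.card_equiv ((Equiv.refl _).prodCongr (Equiv.addRight 1)) fun p => by
      rw [Finset.mem_filter_univ, Finset.mem_filter_univ]
      simp [triangleEdges]
  have := cutEdges_le_add_card_endpoint_mem_symmDiff (triangleEdges φ) S T
  exact (by omega : cutEdges (triangleEdges φ) S ≤
    cutEdges (triangleEdges φ) T + 2 * #{p | (triangleEdges φ p).1 ∈ S ∆ T})

lemma cutEdges_variableEdges_of_consistent {T : Finset (V × Bool)}
    (hT : ∀ x, (x, true) ∈ T ↔ (x, false) ∉ T) :
    cutEdges (variableEdges φ) T = 3 * m := by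
  have hnone :
      #{p : Fin m × Fin 3 | ((φ p.1 p.2).1, true) ∈ T ↔ ((φ p.1 p.2).1, false) ∈ T} = 0 := by
    simp only [Finset.card_eq_zero, Finset.filter_eq_empty_iff, hT]
    tauto
  simpa [hnone] using cutEdges_variableEdges_add_card φ T

lemma cutEdges_add_card_le_of_consistent (S T : Finset (V × Bool))
    (hT : ∀ x, (x, true) ∈ T ↔ (x, false) ∉ T) :
    cutEdges (maxCutEdges φ) S +
      #{p : Fin m × Fin 3 | ((φ p.1 p.2).1, true) ∈ S ↔ ((φ p.1 p.2).1, false) ∈ S} ≤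
      cutEdges (maxCutEdges φ) T + 2 * #{p : Fin m × Fin 3 | φ p.1 p.2 ∈ S ∆ T} := by
  have hS := cutEdges_variableEdges_add_card φ S
  have hT' := cutEdges_variableEdges_of_consistent φ hT
  have := cutEdges_triangleEdges_le φ S T
  rw [maxCutEdges_eq_sumElim, cutEdges_sumElim, cutEdges_sumElim]
  omega

lemma card_filter_ne_succ (f : Fin 3 → Bool) :
    #{j | f j ≠ f (j + 1)} = if (∃ j, f j = true) ∧ (∃ j, f j = false) then 2 else 0 := by
  revert f
  decide

variable [Fintype V]

def satisfiedLiterals (σ : V → Bool) : Finset (V × Bool) := {l | σ l.1 = l.2}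

lemma eq_satisfiedLiterals_of_consistent {T : Finset (V × Bool)}
    (hT : ∀ x, (x, true) ∈ T ↔ (x, false) ∉ T) :
    T = satisfiedLiterals fun x => decide ((x, true) ∈ T) := by
  ext ⟨x, (_ | _)⟩ <;> simp [satisfiedLiterals, hT x]

lemma cutEdges_triangleEdges_satisfiedLiterals (σ : V → Bool) :
    cutEdges (triangleEdges φ) (satisfiedLiterals σ) =
      2 * #{i | (∃ j : Fin 3, σ (φ i j).1 = (φ i j).2) ∧
        (∃ j : Fin 3, σ (φ i j).1 ≠ (φ i j).2)} := by
  rw [cutEdges, Finset.card_filter, Fintype.sum_prod_type, Finset.card_filter, Finset.mul_sum]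
  refine Finset.sum_congr rfl fun i _ => ?_
  have := card_filter_ne_succ fun j => decide (σ (φ i j).1 = (φ i j).2)
  rw [Finset.card_filter] at this
  simp only [decide_eq_true_eq, decide_eq_false_iff_not, ne_eq, decide_eq_decide] at this
  simp only [triangleEdges, satisfiedLiterals, Finset.mem_filter_univ]
  convert this using 2 with j
  · exact if_congr (by tauto) rfl rfl
  · split_ifs <;> rfl

lemma cutEdges_satisfiedLiterals (σ : V → Bool) :
    cutEdges (maxCutEdges φ) (satisfiedLiterals σ) =
      3 * m + 2 * #{i | (∃ j : Fin 3, σ (φ i j).1 = (φ i j).2) ∧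
        (∃ j : Fin 3, σ (φ i j).1 ≠ (φ i j).2)} := by
  rw [maxCutEdges_eq_sumElim, cutEdges_sumElim, cutEdges_triangleEdges_satisfiedLiterals,
    cutEdges_variableEdges_of_consistent]
  intro x
  simp [satisfiedLiterals]

lemma exists_cutEdges_le_cutEdges_satisfiedLiterals (S : Finset (V × Bool)) :
    ∃ σ, cutEdges (maxCutEdges φ) S ≤ cutEdges (maxCutEdges φ) (satisfiedLiterals σ) := by
  set ambiguous : V → Prop := fun x => (x, true) ∈ S ↔ (x, false) ∈ S
  obtain ⟨b, hb⟩ := exists_two_mul_card_filter_eq_le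
    {p : Fin m × Fin 3 | ambiguous (φ p.1 p.2).1} fun p => (φ p.1 p.2).2
  set D : Finset (V × Bool) := {l | ambiguous l.1 ∧ l.2 = b}
  have hT : ∀ x, (x, true) ∈ S ∆ D ↔ (x, false) ∉ S ∆ D := by
    intro x
    cases b <;>
      simp only [D, ambiguous, Finset.mem_symmDiff, Finset.mem_filter_univ, Bool.true_eq_false,
        Bool.false_eq_true, and_true, and_false] <;> tauto
  refine ⟨fun x => decide ((x, true) ∈ S ∆ D), ?_⟩
  rw [← eq_satisfiedLiterals_of_consistent hT]
  have := cutEdges_add_card_le_of_consistent φ S (S ∆ D) hT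
  rw [symmDiff_symmDiff_cancel_left] at this
  change _ + #{p : Fin m × Fin 3 | ambiguous (φ p.1 p.2).1} ≤ _ at this
  have hD : #{p : Fin m × Fin 3 | φ p.1 p.2 ∈ D} =
      #{p ∈ {p : Fin m × Fin 3 | ambiguous (φ p.1 p.2).1} | (φ p.1 p.2).2 = b} := by
    rw [Finset.filter_filter]
    simp [D]
  omega

end Formula

theorem gap_e3naesat_to_gap_multigraph_maxcut
    {V : Type*} [Fintype V] [DecidableEq V] {m : ℕ}
    (φ : Fin m → Fin 3 → V × Bool) (k : ℕ) :
    (∃ σ : V → Bool,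
      k ≤ (Finset.univ.filter fun i : Fin m =>
        (∃ j : Fin 3, σ (φ i j).1 = (φ i j).2) ∧
        (∃ j : Fin 3, σ (φ i j).1 ≠ (φ i j).2)).card) ↔
    (∃ S : Finset (V × Bool), 3 * m + 2 * k ≤ cutEdges (maxCutEdges φ) S) := by
  constructor
  · rintro ⟨σ, hσ⟩
    exact ⟨satisfiedLiterals σ, by rw [cutEdges_satisfiedLiterals]; omega⟩
  · rintro ⟨S, hS⟩
    obtain ⟨σ, hσ⟩ := exists_cutEdges_le_cutEdges_satisfiedLiterals φ S
    rw [cutEdges_satisfiedLiterals] at hσ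
    exact ⟨σ, by omega⟩
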